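/- Let K be a 3DM instance and σ(K) the associated spanUFP instance. In any feasible solution of σ(K), at most 8 of the selected tasks have their schedule contained in any single block I. -/

import Mathlib

/-- `ρ = max {29, 3q}`. -/
def rho (q : ℕ) : ℕ := max 29 (3 * q)

/-- The number `x'_i = iρ + 1` associated to the node `x_i`. -/
def xnum (q i : ℕ) : ℤ := (i : ℤ) * (rho q : ℤ) + 1

/-- The number `y'_j = jρ² + 2` associated to the node `y_j`. -/
def ynum (q j : ℕ) : ℤ := (j : ℤ) * (rho q : ℤ) ^ 2 + 2

/-- The number `z'_k = kρ³ + 4` associated to the node `z_k`. -/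
def znum (q k : ℕ) : ℤ := (k : ℤ) * (rho q : ℤ) ^ 3 + 4

/-- The number `h'_ℓ = -iρ - jρ² - kρ³ - 7` associated to the hyperedge `h_ℓ = (x_i, y_j, z_k)`. -/
def hnum (q : ℕ) (h : ℕ × ℕ × ℕ) : ℤ :=
  -((h.1 : ℤ) * (rho q : ℤ)) - (h.2.1 : ℤ) * (rho q : ℤ) ^ 2 - (h.2.2 : ℤ) * (rho q : ℤ) ^ 3 - 7

/-- The set `Q(K)` of the `3q + m` integers associated to a 3DM instance `K = (q, E)`. -/
def QK (q : ℕ) (E : Finset (ℕ × ℕ × ℕ)) : Finset ℤ :=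
  ((Finset.Icc 1 q).image (xnum q)) ∪ ((Finset.Icc 1 q).image (ynum q)) ∪
    ((Finset.Icc 1 q).image (znum q)) ∪ (E.image (hnum q))

/-- `(q, E)` is a 3DM instance: every hyperedge is a triple of node indices in `{1, …, q}`
(`X`, `Y` and `Z` are identified with `{1, …, q}`). -/
def ValidE (q : ℕ) (E : Finset (ℕ × ℕ × ℕ)) : Prop :=
  ∀ h ∈ E, h.1 ∈ Finset.Icc 1 q ∧ h.2.1 ∈ Finset.Icc 1 q ∧ h.2.2 ∈ Finset.Icc 1 q

/-- A hypermatching: no two distinct hyperedges share a node. -/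
def Matching (M : Finset (ℕ × ℕ × ℕ)) : Prop :=
  ∀ h ∈ M, ∀ h' ∈ M, h ≠ h' → h.1 ≠ h'.1 ∧ h.2.1 ≠ h'.2.1 ∧ h.2.2 ≠ h'.2.2

/-- `μ = 1 + max_{u' ∈ Q(K)} 10|u'|`. -/
def mu (q : ℕ) (E : Finset (ℕ × ℕ × ℕ)) : ℕ :=
  1 + (QK q E).sup (fun u => 10 * u.natAbs)

/-- `A = 5μ + 4`. -/
def Aval (q : ℕ) (E : Finset (ℕ × ℕ × ℕ)) : ℕ := 5 * mu q E + 4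

/-- The path of `σ(K)` has `(2A+1)q - 1` edges; edges are identified with the
integers `0, 1, …, (2A+1)q - 2`. -/
def numEdges (q : ℕ) (E : Finset (ℕ × ℕ × ℕ)) : ℤ := (2 * (Aval q E : ℤ) + 1) * q - 1

/-- The capacity profile of `σ(K)`: within each block of `2A` consecutive edges, the
leftmost `A` edges have capacity `4A + 4` and the rightmost `A` edges have capacity `4A`;
blocks are separated by single edges of capacity `0`. -/
def cap (q : ℕ) (E : Finset (ℕ × ℕ × ℕ)) (e : ℤ) : ℤ :=
  let A : ℤ := (Aval q E : ℤ)
  let r := e % (2 * A + 1)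
  if r < A then 4 * A + 4 else if r < 2 * A then 4 * A else 0

/-- An element `u ∈ X ∪ Y ∪ Z ∪ E` of the 3DM instance. -/
inductive Elem where
  | X : ℕ → Elem
  | Y : ℕ → Elem
  | Z : ℕ → Elem
  | H : ℕ × ℕ × ℕ → Elem
deriving DecidableEq

/-- The number `u' ∈ Q(K)` associated to `u ∈ X ∪ Y ∪ Z ∪ E`. -/
def elemVal (q : ℕ) : Elem → ℤ
  | .X i => xnum q i
  | .Y j => ynum q j
  | .Z k => znum q k
  | .H h => hnum q h

/-- `u` is an actual element of the instance `(q, E)`. -/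
def validElem (q : ℕ) (E : Finset (ℕ × ℕ × ℕ)) : Elem → Prop
  | .X i => i ∈ Finset.Icc 1 q
  | .Y j => j ∈ Finset.Icc 1 q
  | .Z k => k ∈ Finset.Icc 1 q
  | .H h => h ∈ E

/-- A task of `σ(K)` is a pair `(u, s)` with `u ∈ X ∪ Y ∪ Z ∪ E`; `s = true` encodes the
task `t_L(u)` and `s = false` encodes the task `t_R(u)`. All tasks have weight 1. -/
abbrev UTask := Elem × Bool

/-- The length of a task: `t_L(u)` has length `A - 10u'`, `t_R(u)` has length `A + 10u'`. -/
def taskLen (q : ℕ) (E : Finset (ℕ × ℕ × ℕ)) (t : UTask) : ℤ :=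
  if t.2 then (Aval q E : ℤ) - 10 * elemVal q t.1
  else (Aval q E : ℤ) + 10 * elemVal q t.1

/-- The demand of a task: `t_L(u)` has demand `A + 10u' + 1`, `t_R(u)` has demand `A - 10u'`. -/
def taskDem (q : ℕ) (E : Finset (ℕ × ℕ × ℕ)) (t : UTask) : ℤ :=
  if t.2 then (Aval q E : ℤ) + 10 * elemVal q t.1 + 1
  else (Aval q E : ℤ) - 10 * elemVal q t.1

/-- The schedule of task `t`: the contiguous interval of `taskLen` edges starting at
edge `start t`. -/
noncomputable def sched (q : ℕ) (E : Finset (ℕ × ℕ × ℕ)) (start : UTask → ℤ) (t : UTask) : Finset ℤ :=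
  Finset.Ico (start t) (start t + taskLen q E t)

/-- `(S, start)` is a feasible solution of `σ(K)`: every selected task is a task of the
instance, is scheduled (contiguously, with exactly its length) within the path, and on every
edge `e` the total demand of the selected tasks whose schedule contains `e` is at most the
capacity of `e`. -/
def Feasible (q : ℕ) (E : Finset (ℕ × ℕ × ℕ)) (S : Finset UTask) (start : UTask → ℤ) : Prop :=
  (∀ t ∈ S, validElem q E t.1) ∧
  (∀ t ∈ S, 0 ≤ start t ∧ start t + taskLen q E t ≤ numEdges q E) ∧
  (∀ e : ℤ, 0 ≤ e → e < numEdges q E →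
    ∑ t ∈ S.filter (fun t => e ∈ sched q E start t), taskDem q E t ≤ cap q E e)

/-- The first edge of the `b`-th block (`b ∈ {0, …, q-1}`). -/
def blockStart (q : ℕ) (E : Finset (ℕ × ℕ × ℕ)) (b : ℕ) : ℤ :=
  (b : ℤ) * (2 * (Aval q E : ℤ) + 1)

/-- The `b`-th block of `2A` consecutive edges (`b ∈ {0, …, q-1}`). -/
noncomputable def block (q : ℕ) (E : Finset (ℕ × ℕ × ℕ)) (b : ℕ) : Finset ℤ :=
  Finset.Ico (blockStart q E b) (blockStart q E b + 2 * (Aval q E : ℤ))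

/-!
Every task of `σ(K)` has length and demand at least `4μ + 5`, because `10|u'| < μ` and
`A = 5μ + 4`. Since no edge has capacity above `4A + 4 = 20μ + 20 < 5(4μ + 5)`, at most four
selected tasks share an edge. A block has `2A = 10μ + 8` edges, fewer than three times the
minimal task length, so every task inside it covers one of its `(4μ+5)`-th and `(8μ+10)`-th
edges; these two edges carry at most `4 + 4` tasks.
-/

theorem Finset.card_le_of_le_of_sum_le {ι R : Type*} [Semiring R] [LinearOrder R]
    [IsOrderedRing R] {F : Finset ι} {w : ι → R} {d c : R} {n : ℕ} (hd : 0 ≤ d)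
    (hw : ∀ t ∈ F, d ≤ w t) (hsum : ∑ t ∈ F, w t ≤ c) (hc : c < (n + 1) • d) :
    F.card ≤ n := by
  by_contra! hn
  have h := (nsmul_le_nsmul_left hd hn).trans (F.card_nsmul_le_sum w d hw)
  exact (hc.trans_le h).not_ge hsum

theorem Int.mem_Ico_or_mem_Ico_of_le_length {B s L ℓ : ℤ} (hℓ : ℓ ≤ L) (hB : B ≤ s)
    (hs : s + L ≤ B + 3 * ℓ - 1) :
    B + (ℓ - 1) ∈ Finset.Ico s (s + L) ∨ B + (2 * ℓ - 1) ∈ Finset.Ico s (s + L) := by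
  simp only [Finset.mem_Ico]
  omega

section Construction

variable {q : ℕ} {E : Finset (ℕ × ℕ × ℕ)}

theorem elemVal_mem_QK {u : Elem} (hu : validElem q E u) : elemVal q u ∈ QK q E := by
  cases u <;> simp only [QK, Finset.mem_union, Finset.mem_image, elemVal] <;> grind [validElem]

theorem ten_mul_abs_elemVal_lt_mu {u : Elem} (hu : validElem q E u) :
    10 * |elemVal q u| < mu q E := by
  have h := Finset.le_sup (f := fun u : ℤ => 10 * u.natAbs) (elemVal_mem_QK hu)
  rw [Int.abs_eq_natAbs]
  unfold mu
  omega

theorem four_mul_mu_add_five_le_taskLen {t : UTask} (ht : validElem q E t.1) :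
    4 * (mu q E : ℤ) + 5 ≤ taskLen q E t := by
  have h := ten_mul_abs_elemVal_lt_mu ht
  unfold taskLen Aval
  split_ifs <;> cases abs_cases (elemVal q t.1) <;> push_cast <;> linarith

theorem four_mul_mu_add_five_le_taskDem {t : UTask} (ht : validElem q E t.1) :
    4 * (mu q E : ℤ) + 5 ≤ taskDem q E t := by
  have h := ten_mul_abs_elemVal_lt_mu ht
  unfold taskDem Aval
  split_ifs <;> cases abs_cases (elemVal q t.1) <;> push_cast <;> linarith

theorem cap_le (e : ℤ) : cap q E e ≤ 4 * (Aval q E : ℤ) + 4 := by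
  simp only [cap]
  split_ifs <;> omega

theorem card_filter_mem_sched_le_four {S : Finset UTask} {start : UTask → ℤ}
    (hfeas : Feasible q E S start) {e : ℤ} (he₀ : 0 ≤ e) (he : e < numEdges q E) :
    (S.filter (fun t => e ∈ sched q E start t)).card ≤ 4 := by
  refine Finset.card_le_of_le_of_sum_le (by positivity)
    (fun t ht => four_mul_mu_add_five_le_taskDem (hfeas.1 t (Finset.mem_of_mem_filter t ht)))
    ((hfeas.2.2 e he₀ he).trans (cap_le e)) ?_
  simp only [Aval, nsmul_eq_mul]
  push_cast
  linarith

theorem blockStart_add_mem_path {b : ℕ} (hb : b < q) {r : ℤ} (hr₀ : 0 ≤ r)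
    (hr : r < 2 * (Aval q E : ℤ)) :
    0 ≤ blockStart q E b + r ∧ blockStart q E b + r < numEdges q E := by
  have hb' : (b : ℤ) + 1 ≤ q := by exact_mod_cast hb
  unfold blockStart numEdges
  constructor <;> nlinarith

end Construction

theorem at_most_eight_per_block_general (q : ℕ) (E : Finset (ℕ × ℕ × ℕ))
    (S : Finset UTask) (start : UTask → ℤ) (hfeas : Feasible q E S start)
    (b : ℕ) (hb : b < q) :
    (S.filter (fun t => sched q E start t ⊆ block q E b)).card ≤ 8 := by
  set ℓ : ℤ := 4 * (mu q E : ℤ) + 5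
  have hA : (Aval q E : ℤ) = 5 * mu q E + 4 := by simp [Aval]
  have hmu : 1 ≤ mu q E := Nat.le_add_right 1 _
  set e₁ := blockStart q E b + (ℓ - 1)
  set e₂ := blockStart q E b + (2 * ℓ - 1)
  have hpierce : S.filter (fun t => sched q E start t ⊆ block q E b) ⊆
      S.filter (fun t => e₁ ∈ sched q E start t) ∪ S.filter (fun t => e₂ ∈ sched q E start t) := by
    intro t ht
    obtain ⟨htS, hsub⟩ := Finset.mem_filter.mp ht
    have hlen := four_mul_mu_add_five_le_taskLen (hfeas.1 t htS)
    obtain ⟨hs, hend⟩ := (Finset.Ico_subset_Ico_iff (by linarith)).mp hsub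
    rcases Int.mem_Ico_or_mem_Ico_of_le_length hlen hs (by linarith) with h | h
    · exact Finset.mem_union_left _ (Finset.mem_filter.mpr ⟨htS, h⟩)
    · exact Finset.mem_union_right _ (Finset.mem_filter.mpr ⟨htS, h⟩)
  obtain ⟨he₁₀, he₁⟩ := blockStart_add_mem_path (E := E) hb (r := ℓ - 1) (by omega) (by omega)
  obtain ⟨he₂₀, he₂⟩ := blockStart_add_mem_path (E := E) hb (r := 2 * ℓ - 1) (by omega) (by omega)
  calc _ ≤ _ := Finset.card_le_card hpierce
    _ ≤ _ := Finset.card_union_le _ _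
    _ ≤ 4 + 4 := add_le_add (card_filter_mem_sched_le_four hfeas he₁₀ he₁)
      (card_filter_mem_sched_le_four hfeas he₂₀ he₂)

/-- In any feasible solution of `σ(K)`, at most 8 of the selected tasks have their schedule
contained in any single block. -/
theorem at_most_eight_per_block (q : ℕ) (E : Finset (ℕ × ℕ × ℕ)) (hE : ValidE q E)
    (S : Finset UTask) (start : UTask → ℤ) (hfeas : Feasible q E S start)
    (b : ℕ) (hb : b < q) :
    (S.filter (fun t => sched q E start t ⊆ block q E b)).card ≤ 8 :=
  at_most_eight_per_block_general q E S start hfeas b hb
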